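/- arXiv:1504.07891 — 6 statements merged into one kernel-verified Lean document; each statement's English description precedes it below -/
import Mathlib

section
/- Let δ³ = a₁³ − 27a₃ with δ ≠ 0 and let ζ₃ be a primitive cube root of unity. Then the point T' = (3a₃/(δ − a₁), a₃(ζ₃δ − a₁)/(δ − a₁)) is a 3-torsion point on the elliptic curve y² + a₁xy + a₃y = x³, provided δ ≠ a₁. -/
/-!
Put `α = a₁ - ζδ`, `β = a₁ - ζ²δ`, `γ = a₁ - δ`. Then `α + β + γ = 3a₁` and
`αβγ = a₁³ - δ³ = 27a₃`, and `T' = (-αβ/9, α²β/27)`. On any curve `y² + a₁xy + a₃y = x³` with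
`3a₁ = α + β + γ` and `27a₃ = αβγ` this point lies on the curve, and its tangent has slope
`α(2β - α - γ) / (3(α - β))`; the tangent is an inflectional one, i.e. `3T' = O`, as soon as
`α² + β² + γ² = αβ + βγ + γα`. That holds here because `α, β, γ` are `a₁` minus `δ` times the
three cube roots of unity.
-/

namespace WeierstrassCurve.Affine

variable {F : Type*} [Field F] {W : Affine F} {x y : F}

theorem nonsingular_of_Y_ne (h : W.Equation x y) (hy : y ≠ W.negY x y) : W.Nonsingular x y :=
  (W.nonsingular_iff x y).2 ⟨h, Or.inr hy⟩

/-- `addX x x ℓ = x` says that the tangent meets the curve only at `(x, y)`, so `2P = -P`. -/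
theorem exists_three_nsmul_eq_zero_of_addX_slope_eq [DecidableEq F] (h : W.Equation x y)
    (hy : y ≠ W.negY x y) (hflex : W.addX x x (W.slope x x y y) = x) :
    ∃ h : W.Nonsingular x y, 3 • Point.some x y h = 0 := by
  refine ⟨nonsingular_of_Y_ne h hy, ?_⟩
  rw [succ_nsmul, two_nsmul, Point.add_self_of_Y_ne hy]
  exact Point.add_of_Y_eq hflex (by rw [addY, negAddY, hflex, sub_self, mul_zero, zero_add])

section OfA₁A₃

variable {K : Type*} [Field K] [CharZero K] {a₁ a₃ α β γ : K}

abbrev ofA₁A₃ (a₁ a₃ : K) : Affine K :=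
  { a₁ := a₁, a₂ := 0, a₃ := a₃, a₄ := 0, a₆ := 0 }

theorem ofA₁A₃_equation (h₁ : a₁ = (α + β + γ) / 3) (h₃ : a₃ = α * β * γ / 27) :
    (ofA₁A₃ a₁ a₃).Equation (-(α * β) / 9) (α ^ 2 * β / 27) := by
  subst h₁ h₃
  rw [equation_iff]
  ring

theorem ofA₁A₃_sub_negY (h₁ : a₁ = (α + β + γ) / 3) (h₃ : a₃ = α * β * γ / 27) :
    α ^ 2 * β / 27 - (ofA₁A₃ a₁ a₃).negY (-(α * β) / 9) (α ^ 2 * β / 27) =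
      α * β * (α - β) / 27 := by
  subst h₁ h₃
  rw [negY]
  ring

theorem ofA₁A₃_Y_ne_negY (h₁ : a₁ = (α + β + γ) / 3) (h₃ : a₃ = α * β * γ / 27)
    (h : α * β * (α - β) ≠ 0) :
    α ^ 2 * β / 27 ≠ (ofA₁A₃ a₁ a₃).negY (-(α * β) / 9) (α ^ 2 * β / 27) := by
  rw [← sub_ne_zero, ofA₁A₃_sub_negY h₁ h₃]
  exact div_ne_zero h (by norm_num)

theorem ofA₁A₃_slope [DecidableEq K] (h₁ : a₁ = (α + β + γ) / 3) (h₃ : a₃ = α * β * γ / 27)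
    (h : α * β * (α - β) ≠ 0) :
    (ofA₁A₃ a₁ a₃).slope (-(α * β) / 9) (-(α * β) / 9) (α ^ 2 * β / 27) (α ^ 2 * β / 27) =
      α * (2 * β - α - γ) / (3 * (α - β)) := by
  rw [slope_of_Y_ne rfl (ofA₁A₃_Y_ne_negY h₁ h₃ h), ofA₁A₃_sub_negY h₁ h₃,
    div_eq_div_iff (div_ne_zero h (by norm_num))
      (mul_ne_zero three_ne_zero (right_ne_zero_of_mul h))]
  subst h₁ h₃
  ring

theorem ofA₁A₃_addX_slope [DecidableEq K] (h₁ : a₁ = (α + β + γ) / 3)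
    (h₃ : a₃ = α * β * γ / 27) (h : α * β * (α - β) ≠ 0)
    (hflex : α ^ 2 + β ^ 2 + γ ^ 2 = α * β + β * γ + γ * α) :
    (ofA₁A₃ a₁ a₃).addX (-(α * β) / 9) (-(α * β) / 9)
      ((ofA₁A₃ a₁ a₃).slope (-(α * β) / 9) (-(α * β) / 9) (α ^ 2 * β / 27) (α ^ 2 * β / 27)) =
      -(α * β) / 9 := by
  have hαβ : α - β ≠ 0 := right_ne_zero_of_mul h
  rw [ofA₁A₃_slope h₁ h₃ h, addX]
  subst h₁
  field_simp
  linear_combination 9 * α * β * hflex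

end OfA₁A₃

end WeierstrassCurve.Affine

section CubeRootsOfUnity

variable {K : Type*} [Field K] {a₁ δ ζ : K}

theorem eq_sum_sub_mul_cubeRoots_div_three [CharZero K] (hζ : ζ ^ 2 + ζ + 1 = 0) :
    a₁ = ((a₁ - ζ * δ) + (a₁ - ζ ^ 2 * δ) + (a₁ - δ)) / 3 := by
  linear_combination (δ / 3) * hζ

theorem prod_sub_mul_cubeRoots (hζ : ζ ^ 2 + ζ + 1 = 0) :
    (a₁ - ζ * δ) * (a₁ - ζ ^ 2 * δ) * (a₁ - δ) = a₁ ^ 3 - δ ^ 3 := by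
  linear_combination (a₁ - δ) * (-a₁ * δ + (ζ - 1) * δ ^ 2) * hζ

theorem sum_sq_sub_mul_cubeRoots (hζ : ζ ^ 2 + ζ + 1 = 0) :
    (a₁ - ζ * δ) ^ 2 + (a₁ - ζ ^ 2 * δ) ^ 2 + (a₁ - δ) ^ 2 =
      (a₁ - ζ * δ) * (a₁ - ζ ^ 2 * δ) + (a₁ - ζ ^ 2 * δ) * (a₁ - δ) + (a₁ - δ) * (a₁ - ζ * δ) := by
  linear_combination δ ^ 2 * (ζ - 1) ^ 2 * hζ

theorem sub_mul_cubeRoot_sub_ne_zero [CharZero K] (hζ : ζ ^ 2 + ζ + 1 = 0) (hδ : δ ≠ 0) :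
    (a₁ - ζ * δ) - (a₁ - ζ ^ 2 * δ) ≠ 0 := by
  have hsq : (ζ ^ 2 - ζ) ^ 2 = -3 := by linear_combination (ζ ^ 2 - 3 * ζ + 3) * hζ
  have hζ' : ζ ^ 2 - ζ ≠ 0 := fun h => by norm_num [h] at hsq
  rw [show (a₁ - ζ * δ) - (a₁ - ζ ^ 2 * δ) = (ζ ^ 2 - ζ) * δ by ring]
  exact mul_ne_zero hζ' hδ

end CubeRootsOfUnity

open WeierstrassCurve.Affine

open Classical in
/-- Let `δ³ = a₁³ - 27a₃` with `δ ≠ 0`, `δ ≠ a₁`, and let `ζ` be a primitive cube root of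
unity (`ζ² + ζ + 1 = 0`). Then `T' = (3a₃/(δ - a₁), a₃(ζδ - a₁)/(δ - a₁))` is a
3-torsion point on the elliptic curve `y² + a₁xy + a₃y = x³`. -/
theorem stmt6 {K : Type*} [Field K] [CharZero K] (a₁ a₃ δ ζ : K)
    (hΔ : a₃ * (a₁ ^ 3 - 27 * a₃) ≠ 0) (hδ : δ ^ 3 = a₁ ^ 3 - 27 * a₃) (hδ0 : δ ≠ 0)
    (hζ : ζ ^ 2 + ζ + 1 = 0) (hne : δ ≠ a₁) :
    ∃ h : WeierstrassCurve.Affine.Nonsingular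
        ({ a₁ := a₁, a₂ := 0, a₃ := a₃, a₄ := 0, a₆ := 0 } : WeierstrassCurve.Affine K)
        (3 * a₃ / (δ - a₁)) (a₃ * (ζ * δ - a₁) / (δ - a₁)),
      3 • WeierstrassCurve.Affine.Point.some _ _ h = 0 := by
  have hprod : (a₁ - ζ * δ) * (a₁ - ζ ^ 2 * δ) * (a₁ - δ) = 27 * a₃ := by
    rw [prod_sub_mul_cubeRoots hζ, hδ, sub_sub_cancel]
  have h₁ := eq_sum_sub_mul_cubeRoots_div_three (a₁ := a₁) (δ := δ) hζ
  have h₃ : a₃ = (a₁ - ζ * δ) * (a₁ - ζ ^ 2 * δ) * (a₁ - δ) / 27 := by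
    rw [hprod]
    ring
  have hαβ : (a₁ - ζ * δ) * (a₁ - ζ ^ 2 * δ) ≠ 0 :=
    left_ne_zero_of_mul (hprod ▸ mul_ne_zero (by norm_num) (left_ne_zero_of_mul hΔ))
  have hY := mul_ne_zero hαβ (sub_mul_cubeRoot_sub_ne_zero (a₁ := a₁) hζ hδ0)
  have hγ : δ - a₁ ≠ 0 := sub_ne_zero.2 hne
  have hx : 3 * a₃ / (δ - a₁) = -((a₁ - ζ * δ) * (a₁ - ζ ^ 2 * δ)) / 9 := by
    rw [div_eq_div_iff hγ (by norm_num), h₃]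
    ring
  have hy : a₃ * (ζ * δ - a₁) / (δ - a₁) = (a₁ - ζ * δ) ^ 2 * (a₁ - ζ ^ 2 * δ) / 27 := by
    rw [div_eq_div_iff hγ (by norm_num), h₃]
    ring
  rw [hx, hy]
  exact exists_three_nsmul_eq_zero_of_addX_slope_eq (ofA₁A₃_equation h₁ h₃)
    (ofA₁A₃_Y_ne_negY h₁ h₃ hY) (ofA₁A₃_addX_slope h₁ h₃ hY (sum_sq_sub_mul_cubeRoots hζ))
end

section
/- The system of equations a²b + b²c + c²a)d = 0, bc³ − ba³ − cd³ = 0, ab³ − ac³ − bd³ = 0, ca³ − cb³ − ad³ = 0 in P³ defines the union of the curve {a²b + b²c + c²a = 0, ab² + bc² + ca² = d³} and the four points (0:0:0:1), (1:1:1:0), (1:ζ₃:ζ₃²:0), (1:ζ₃²:ζ₃:0). -/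
/-!
Write `P = a²b + b²c + c²a`, `Q = ab² + bc² + ca²` and `R = Q - d³`. The last three equations
are `cR = aP`, `bR = cP`, `aR = bP`, i.e. `R • (a, b, c) = P • (b, c, a)`. If `P = 0`, then
`R = 0` (the curve) or `a = b = c = 0` (the point `(0:0:0:1)`). If `P ≠ 0`, then `d = 0` and
`(b, c, a) = t • (a, b, c)` with `t = R / P`, so `t³ = 1` and the point is `(1 : t : t² : 0)`.
-/

section

variable {K : Type*}

def IsSolution [CommRing K] (a b c d : K) : Prop :=
  (a ^ 2 * b + b ^ 2 * c + c ^ 2 * a) * d = 0 ∧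
    b * c ^ 3 - b * a ^ 3 - c * d ^ 3 = 0 ∧
    a * b ^ 3 - a * c ^ 3 - b * d ^ 3 = 0 ∧
    c * a ^ 3 - c * b ^ 3 - a * d ^ 3 = 0

theorem isSolution_iff [CommRing K] (a b c d : K) :
    IsSolution a b c d ↔ (a ^ 2 * b + b ^ 2 * c + c ^ 2 * a) * d = 0 ∧
      c * (a * b ^ 2 + b * c ^ 2 + c * a ^ 2 - d ^ 3) =
        a * (a ^ 2 * b + b ^ 2 * c + c ^ 2 * a) ∧
      b * (a * b ^ 2 + b * c ^ 2 + c * a ^ 2 - d ^ 3) =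
        c * (a ^ 2 * b + b ^ 2 * c + c ^ 2 * a) ∧
      a * (a * b ^ 2 + b * c ^ 2 + c * a ^ 2 - d ^ 3) =
        b * (a ^ 2 * b + b ^ 2 * c + c ^ 2 * a) := by
  refine and_congr Iff.rfl (and_congr ?_ (and_congr ?_ ?_))
  all_goals exact ⟨fun h ↦ by linear_combination h, fun h ↦ by linear_combination h⟩

theorem isSolution_of_cubes_eq [CommRing K] {a b c : K} (hab : a ^ 3 = b ^ 3)
    (hbc : b ^ 3 = c ^ 3) : IsSolution a b c 0 :=
  ⟨by ring, by linear_combination -b * (hab + hbc), by linear_combination a * hbc,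
    by linear_combination c * hab⟩

theorem cases_of_mul_eq_mul_rotate [Field K] {a b c p r : K} (h₁ : a * r = b * p)
    (h₂ : b * r = c * p) (h₃ : c * r = a * p) :
    (a = 0 ∧ b = 0 ∧ c = 0) ∨ (p = 0 ∧ r = 0) ∨
      (p ≠ 0 ∧ a ≠ 0 ∧ ∃ t : K, t ^ 3 = 1 ∧ b = t * a ∧ c = t ^ 2 * a) := by
  by_cases hp : p = 0
  · subst hp
    by_cases hr : r = 0
    · exact .inr (.inl ⟨rfl, hr⟩)
    · simp_all
  have hdiv {x y : K} (h : x * r = y * p) : y = r / p * x := by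
    rw [div_mul_eq_mul_div, eq_div_iff hp]; linear_combination -h
  set t := r / p
  have hb := hdiv h₁
  have hc := hdiv h₂
  have ha := hdiv h₃
  by_cases ha0 : a = 0
  · rw [ha0, mul_zero] at hb
    rw [hb, mul_zero] at hc
    exact .inl ⟨ha0, hb, hc⟩
  refine .inr (.inr ⟨hp, ha0, t, ?_, hb, by rw [hc, hb]; ring⟩)
  refine mul_right_cancel₀ ha0 ?_
  linear_combination -(ha + t * hc + t ^ 2 * hb)

theorem eq_one_or_eq_or_eq_sq_of_pow_three_eq_one [CommRing K] [IsDomain K] {ζ t : K}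
    (hζ : IsPrimitiveRoot ζ 3) (ht : t ^ 3 = 1) : t = 1 ∨ t = ζ ∨ t = ζ ^ 2 := by
  obtain ⟨i, hi, rfl⟩ := hζ.eq_pow_of_pow_eq_one ht
  interval_cases i <;> simp

end

theorem stmt7_general {K : Type*} [Field K] (ζ : K)
    (hζ : IsPrimitiveRoot ζ 3) (a b c d : K) :
    ((a ^ 2 * b + b ^ 2 * c + c ^ 2 * a) * d = 0 ∧
     b * c ^ 3 - b * a ^ 3 - c * d ^ 3 = 0 ∧
     a * b ^ 3 - a * c ^ 3 - b * d ^ 3 = 0 ∧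
     c * a ^ 3 - c * b ^ 3 - a * d ^ 3 = 0) ↔
    ((a ^ 2 * b + b ^ 2 * c + c ^ 2 * a = 0 ∧
      a * b ^ 2 + b * c ^ 2 + c * a ^ 2 = d ^ 3) ∨
     ∃ lam : K, lam ≠ 0 ∧
       ((a, b, c, d) = (0, 0, 0, lam) ∨
        (a, b, c, d) = (lam, lam, lam, 0) ∨
        (a, b, c, d) = (lam, lam * ζ, lam * ζ ^ 2, 0) ∨
        (a, b, c, d) = (lam, lam * ζ ^ 2, lam * ζ, 0))) := by
  have hζ3 : ζ ^ 3 = 1 := hζ.pow_eq_one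
  change IsSolution a b c d ↔ _
  constructor
  · rw [isSolution_iff]
    rintro ⟨hPd, h₃, h₂, h₁⟩
    rcases cases_of_mul_eq_mul_rotate h₁ h₂ h₃ with
      ⟨rfl, rfl, rfl⟩ | ⟨hP, hR⟩ | ⟨hP, ha, t, ht, rfl, rfl⟩
    · rcases eq_or_ne d 0 with rfl | hd
      · left; simp
      · exact .inr ⟨d, hd, .inl rfl⟩
    · exact .inl ⟨hP, by linear_combination hR⟩
    · obtain rfl : d = 0 := (mul_eq_zero.mp hPd).resolve_left hP
      refine .inr ⟨a, ha, ?_⟩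
      rcases eq_one_or_eq_or_eq_sq_of_pow_three_eq_one hζ ht with rfl | rfl | rfl
      · simp
      · simp [mul_comm]
      · refine .inr (.inr (.inr ?_))
        simp only [Prod.mk.injEq, true_and, and_true]
        exact ⟨mul_comm _ _, by linear_combination a * ζ * hζ3⟩
  · rintro (⟨hP, hQ⟩ | ⟨lam, -, h | h | h | h⟩)
    · rw [isSolution_iff, hQ, sub_self, hP]
      simp
    all_goals simp only [Prod.mk.injEq] at h; obtain ⟨rfl, rfl, rfl, rfl⟩ := h
    · simp [IsSolution]
    · exact isSolution_of_cubes_eq rfl rfl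
    · exact isSolution_of_cubes_eq (by linear_combination -a ^ 3 * hζ3)
        (by linear_combination -a ^ 3 * ζ ^ 3 * hζ3)
    · exact isSolution_of_cubes_eq (by linear_combination -a ^ 3 * (ζ ^ 3 + 1) * hζ3)
        (by linear_combination a ^ 3 * ζ ^ 3 * hζ3)

/-- The system `(a²b + b²c + c²a)d = 0`, `bc³ - ba³ - cd³ = 0`, `ab³ - ac³ - bd³ = 0`,
`ca³ - cb³ - ad³ = 0` in `ℙ³` defines the union of the curve
`{a²b + b²c + c²a = 0, ab² + bc² + ca² = d³}` and the four points `(0:0:0:1)`,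
`(1:1:1:0)`, `(1:ζ₃:ζ₃²:0)`, `(1:ζ₃²:ζ₃:0)`. -/
theorem stmt7 {K : Type*} [Field K] [IsAlgClosed K] [CharZero K] (ζ : K)
    (hζ : IsPrimitiveRoot ζ 3) (a b c d : K) (hne : ¬(a = 0 ∧ b = 0 ∧ c = 0 ∧ d = 0)) :
    ((a ^ 2 * b + b ^ 2 * c + c ^ 2 * a) * d = 0 ∧
     b * c ^ 3 - b * a ^ 3 - c * d ^ 3 = 0 ∧
     a * b ^ 3 - a * c ^ 3 - b * d ^ 3 = 0 ∧
     c * a ^ 3 - c * b ^ 3 - a * d ^ 3 = 0) ↔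
    ((a ^ 2 * b + b ^ 2 * c + c ^ 2 * a = 0 ∧
      a * b ^ 2 + b * c ^ 2 + c * a ^ 2 = d ^ 3) ∨
     ∃ lam : K, lam ≠ 0 ∧
       ((a, b, c, d) = (0, 0, 0, lam) ∨
        (a, b, c, d) = (lam, lam, lam, 0) ∨
        (a, b, c, d) = (lam, lam * ζ, lam * ζ ^ 2, 0) ∨
        (a, b, c, d) = (lam, lam * ζ ^ 2, lam * ζ, 0))) :=
  stmt7_general ζ hζ a b c d
end

section
/- Let F₁ = a²b + b²c + c²a and F₂ = ab² + bc² + ca² − d³. Then the determinant of the Hessian matrix of tF₁ − F₂ (with respect to the variables a,b,c,d) equals −48(t³ − 1)(a³ + b³ + c³ − 3abc)d. -/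
/-!
The Hessian is block diagonal: `∂²F/∂d² = 6d`, and the `(a, b, c)`-block is the back-circulant
matrix with first row `(x, y, z) = 2 (tb - c, ta - b, tc - a)`, whose determinant is
`-(x³ + y³ + z³ - 3xyz)`. That cubic is the norm form of the group algebra `ℚ[C₃] = ℚ[g]/(g³ - 1)`,
hence multiplicative, and `x + yg + zg² = 2 (t - g)(b + ag + cg²)`. Since the norm of `t - g` is
`t³ - 1` and that of `b + ag + cg²` is `a³ + b³ + c³ - 3abc`, the determinant is
`6d · (-8) (t³ - 1)(a³ + b³ + c³ - 3abc)`.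
-/

open MvPolynomial

theorem Derivation.map_ofNat {R A M : Type*} [CommSemiring R] [CommSemiring A] [AddCommMonoid M]
    [Algebra R A] [Module A M] [Module R M] (D : Derivation R A M) (n : ℕ) [n.AtLeastTwo] :
    D (no_index (OfNat.ofNat n : A)) = 0 := by
  rw [← Nat.cast_ofNat]
  exact D.map_natCast n

theorem det_backCirculant_blockDiag {R : Type*} [CommRing R] (x y z w : R) :
    !![x, y, z, 0; y, z, x, 0; z, x, y, 0; 0, 0, 0, w].det
      = w * (3 * x * y * z - x ^ 3 - y ^ 3 - z ^ 3) := by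
  simp [Matrix.det_succ_row_zero, Fin.sum_univ_succ, Fin.succAbove]
  ring

theorem hessian_eq_backCirculant_blockDiag :
    let t : MvPolynomial (Fin 5) ℚ := X 0
    let a : MvPolynomial (Fin 5) ℚ := X 1
    let b : MvPolynomial (Fin 5) ℚ := X 2
    let c : MvPolynomial (Fin 5) ℚ := X 3
    let d : MvPolynomial (Fin 5) ℚ := X 4
    let F : MvPolynomial (Fin 5) ℚ :=
      t * (a ^ 2 * b + b ^ 2 * c + c ^ 2 * a) -
        (a * b ^ 2 + b * c ^ 2 + c * a ^ 2 - d ^ 3)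
    (Matrix.of fun i j => pderiv i.succ (pderiv j.succ F) :
        Matrix (Fin 4) (Fin 4) (MvPolynomial (Fin 5) ℚ)) =
      !![2 * (t * b - c), 2 * (t * a - b), 2 * (t * c - a), 0;
        2 * (t * a - b), 2 * (t * c - a), 2 * (t * b - c), 0;
        2 * (t * c - a), 2 * (t * b - c), 2 * (t * a - b), 0;
        0, 0, 0, 6 * d] := by
  intro t a b c d F
  refine Matrix.ext fun i j => ?_
  fin_cases i <;> fin_cases j <;>
    simp [F, t, a, b, c, d, pderiv_X, Pi.single_apply, Derivation.map_ofNat] <;> ring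

/-- With `F₁ = a²b + b²c + c²a` and `F₂ = ab² + bc² + ca² - d³`, the determinant of the
Hessian matrix of `tF₁ - F₂` with respect to `a,b,c,d` equals
`-48(t³ - 1)(a³ + b³ + c³ - 3abc)d`. -/
theorem stmt8 :
    let t : MvPolynomial (Fin 5) ℚ := X 0
    let a : MvPolynomial (Fin 5) ℚ := X 1
    let b : MvPolynomial (Fin 5) ℚ := X 2
    let c : MvPolynomial (Fin 5) ℚ := X 3
    let d : MvPolynomial (Fin 5) ℚ := X 4
    let F : MvPolynomial (Fin 5) ℚ :=
      t * (a ^ 2 * b + b ^ 2 * c + c ^ 2 * a) -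
        (a * b ^ 2 + b * c ^ 2 + c * a ^ 2 - d ^ 3)
    let H : Matrix (Fin 4) (Fin 4) (MvPolynomial (Fin 5) ℚ) :=
      Matrix.of fun i j => pderiv i.succ (pderiv j.succ F)
    H.det = -48 * (t ^ 3 - 1) * (a ^ 3 + b ^ 3 + c ^ 3 - 3 * a * b * c) * d := by
  intro t a b c d F H
  rw [show H = _ from hessian_eq_backCirculant_blockDiag, det_backCirculant_blockDiag]
  ring
end

section
/- Let A⁺(r,s) = c₄r⁴ + 4c₆r³s + 6c₄²r²s² + 4c₄c₆rs³ − (3c₄³ − 4c₆²)s⁴, B⁺(r,s) = c₆r⁶ + 6c₄²r⁵s + 15c₄c₆r⁴s² + 20c₆²r³s³ + 15c₄²c₆r²s⁴ + 6(3c₄⁴ − 2c₄c₆²)rs⁵ + (9c₄³c₆ − 8c₆³)s⁶, and f₊(r,s) = r⁴ − 6c₄r²s² − 8c₆rs³ − 3c₄²s⁴, and consider the Weierstrass equation y² = x³ − 27A⁺(r,s)x − 54B⁺(r,s). Then the polynomial identity (A⁺)³ − (B⁺)² = (c₄³ − c₆²)·f₊(r,s)³ holds. -/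
/-- The identity `(A⁺)³ - (B⁺)² = (c₄³ - c₆²) · f₊(r,s)³` where
`f₊(r,s) = r⁴ - 6c₄r²s² - 8c₆rs³ - 3c₄²s⁴`. -/
theorem stmt16 {R : Type*} [CommRing R] (c₄ c₆ r s : R) :
    (c₄ * r ^ 4 + 4 * c₆ * r ^ 3 * s + 6 * c₄ ^ 2 * r ^ 2 * s ^ 2 +
        4 * c₄ * c₆ * r * s ^ 3 - (3 * c₄ ^ 3 - 4 * c₆ ^ 2) * s ^ 4) ^ 3 -
      (c₆ * r ^ 6 + 6 * c₄ ^ 2 * r ^ 5 * s + 15 * c₄ * c₆ * r ^ 4 * s ^ 2 +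
        20 * c₆ ^ 2 * r ^ 3 * s ^ 3 + 15 * c₄ ^ 2 * c₆ * r ^ 2 * s ^ 4 +
        6 * (3 * c₄ ^ 4 - 2 * c₄ * c₆ ^ 2) * r * s ^ 5 +
        (9 * c₄ ^ 3 * c₆ - 8 * c₆ ^ 3) * s ^ 6) ^ 2
      = (c₄ ^ 3 - c₆ ^ 2) *
          (r ^ 4 - 6 * c₄ * r ^ 2 * s ^ 2 - 8 * c₆ * r * s ^ 3 -
            3 * c₄ ^ 2 * s ^ 4) ^ 3 := by
  ring
end

section
/- Substituting a = 12s − 3w², b = us + 2w³, x = 6vs − 3w³, y = 2sT − w², z = w, t = 1 into F₁⁺ yields 12s²(g₀ + 4s g₁), where g₀ = u² + 3uv + 3v² + 9uw + 6Tvw + 3(T² − 12T + 24)w² and g₁ = T³ − 9T² + 36T − 36. -/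
/-- Substituting `a = 12s - 3w²`, `b = us + 2w³`, `x = 6vs - 3w³`, `y = 2sT - w²`,
`z = w`, `t = 1` into `F₁⁺` yields `12s²(g₀ + 4s g₁)`. -/
theorem stmt18 {R : Type*} [CommRing R] (u v w s T : R) :
    let a := 12 * s - 3 * w ^ 2
    let b := u * s + 2 * w ^ 3
    let x := 6 * v * s - 3 * w ^ 3
    let y := 2 * s * T - w ^ 2
    let z := w
    let t : R := 1
    x ^ 2 * t + 6 * x * y * z + 6 * b * x * t ^ 2 + 6 * y ^ 3 - 9 * a * y ^ 2 * t +
        6 * a ^ 2 * y * t ^ 2 - 3 * b * z ^ 3 + 3 * a ^ 2 * z ^ 2 * t +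
        9 * a * b * z * t ^ 2 - (a ^ 3 - 12 * b ^ 2) * t ^ 3
      = 12 * s ^ 2 *
        ((u ^ 2 + 3 * u * v + 3 * v ^ 2 + 9 * u * w + 6 * T * v * w +
            3 * (T ^ 2 - 12 * T + 24) * w ^ 2) +
          4 * s * (T ^ 3 - 9 * T ^ 2 + 36 * T - 36)) := by
  intro a b x y z t
  ring
end

section
/- Substituting a = 12s − 3w², b = us + 2w³, x = 6vs − 3w³, y = 2sT − w², z = w, t = 1 into F₂⁺ yields 36s²(h₀ + 4s h₁), where h₀ = v²w − (T−1)uw² + 2(T−6)vw² + (T² − 24T + 48)w³ and h₁ = u + (T² − 6T + 12)v − 3(T−2)(T−6)w. -/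
/-- Substituting `a = 12s - 3w²`, `b = us + 2w³`, `x = 6vs - 3w³`, `y = 2sT - w²`,
`z = w`, `t = 1` into `F₂⁺` yields `36s²(h₀ + 4s h₁)`. -/
theorem stmt19 {R : Type*} [CommRing R] (u v w s T : R) :
    let a := 12 * s - 3 * w ^ 2
    let b := u * s + 2 * w ^ 3
    let x := 6 * v * s - 3 * w ^ 3
    let y := 2 * s * T - w ^ 2
    let z := w
    let t : R := 1
    x ^ 2 * z + 6 * x * y ^ 2 - 6 * a * x * y * t + 2 * a ^ 2 * x * t ^ 2 -
        9 * a * y ^ 2 * z - 18 * b * y * z ^ 2 + 12 * a ^ 2 * y * z * t +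
        a ^ 2 * z ^ 3 + 9 * a * b * z ^ 2 * t - 3 * a ^ 3 * z * t ^ 2 +
        a ^ 2 * b * t ^ 3
      = 36 * s ^ 2 *
        ((v ^ 2 * w - (T - 1) * u * w ^ 2 + 2 * (T - 6) * v * w ^ 2 +
            (T ^ 2 - 24 * T + 48) * w ^ 3) +
          4 * s * (u + (T ^ 2 - 6 * T + 12) * v - 3 * (T - 2) * (T - 6) * w)) := by
  intros; ring
end
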